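/- Let H and A be n×n complex matrices with H Hermitian, and let P be an orthogonal projection with range S. Suppose A·S ⊆ S (S is A-invariant), and assume P⊥(−iH − ½A†A)P = 0 and P⊥ A P = 0. Then the subspace S is invariant for the Lindblad generator L(ρ) = −i[H,ρ] + AρA† − ½{A†A,ρ}: for every density matrix ρ with PρP = ρ, one has P⊥·L(ρ)·P⊥ = 0 and P⊥·L(ρ)·P = 0. -/
import Mathlib


open scoped ComplexOrder Matrix

/-- Ticozzi–Viola invariance conditions: if `P⊥ A P = 0` and `P⊥ (-iH - ½AᴴA) P = 0`,
then the range of `P` is invariant for the Lindblad generator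
`L(ρ) = -i[H,ρ] + AρAᴴ - ½{AᴴA, ρ}`. -/
theorem stmt_7 {n : ℕ} (H A P : Matrix (Fin n) (Fin n) ℂ) (hH : H.IsHermitian)
    (hP : P.IsHermitian) (hPproj : P * P = P)
    (hA : (1 - P) * A * P = 0)
    (hHA : (1 - P) * ((-Complex.I) • H - (2 : ℂ)⁻¹ • (Aᴴ * A)) * P = 0) :
    ∀ ρ : Matrix (Fin n) (Fin n) ℂ, ρ.PosSemidef → ρ.trace = 1 → P * ρ * P = ρ →
      (1 - P) * ((-Complex.I) • (H * ρ - ρ * H) + A * ρ * Aᴴ -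
        (2 : ℂ)⁻¹ • (Aᴴ * A * ρ + ρ * (Aᴴ * A))) * (1 - P) = 0 ∧
      (1 - P) * ((-Complex.I) • (H * ρ - ρ * H) + A * ρ * Aᴴ -
        (2 : ℂ)⁻¹ • (Aᴴ * A * ρ + ρ * (Aᴴ * A))) * P = 0 := by
  intro ρ hpsd htr hρ
  have hQP : (1 - P) * P = 0 := by
    simp [Matrix.sub_mul, hPproj]
  have h1 : (1 - P) * ρ = 0 := by
    rw [← hρ, ← mul_assoc, ← mul_assoc, hQP, zero_mul, zero_mul]
  have h3 : (1 - P) * A * ρ = 0 := by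
    rw [← hρ, show (1 - P) * A * (P * ρ * P) = ((1 - P) * A * P) * ρ * P by
      noncomm_ring, hA, zero_mul, zero_mul]
  have h5 : (1 - P) * ((-Complex.I) • H - (2 : ℂ)⁻¹ • (Aᴴ * A)) * ρ = 0 := by
    rw [← hρ, show (1 - P) * ((-Complex.I) • H - (2 : ℂ)⁻¹ • (Aᴴ * A)) * (P * ρ * P)
        = ((1 - P) * ((-Complex.I) • H - (2 : ℂ)⁻¹ • (Aᴴ * A)) * P) * ρ * P by
      noncomm_ring, hHA, zero_mul, zero_mul]
  have hL : (1 - P) * ((-Complex.I) • (H * ρ - ρ * H) + A * ρ * Aᴴ -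
      (2 : ℂ)⁻¹ • (Aᴴ * A * ρ + ρ * (Aᴴ * A))) = 0 := by
    have expand : (1 - P) * ((-Complex.I) • (H * ρ - ρ * H) + A * ρ * Aᴴ -
        (2 : ℂ)⁻¹ • (Aᴴ * A * ρ + ρ * (Aᴴ * A)))
        = (1 - P) * ((-Complex.I) • H - (2 : ℂ)⁻¹ • (Aᴴ * A)) * ρ
          + Complex.I • (((1 - P) * ρ) * H)
          + ((1 - P) * A * ρ) * Aᴴ
          - (2 : ℂ)⁻¹ • (((1 - P) * ρ) * (Aᴴ * A)) := by
      simp only [Matrix.mul_add, Matrix.add_mul, Matrix.mul_sub, Matrix.sub_mul,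
        Matrix.mul_smul, Matrix.smul_mul, mul_one, one_mul, mul_assoc, smul_sub, smul_add]
      module
    rw [expand, h5, h1, h3]
    simp
  rw [hL, zero_mul, zero_mul]
  exact ⟨rfl, rfl⟩
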